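/- Let (M,g) be closed of dimension d ≥ 4 with constant scalar curvature R_g, not conformally equivalent to the round sphere, and let Y(M) < S_d^{−2} be its (attained) Yamabe constant with minimizer u, so that ‖u‖_{L^{2*}}² Y(M) = ‖∇u‖² + ((d−2)R_g/(4(d−1)))‖u‖². Then B^{opt}_{2*}(M) > ((d−2)/(4(d−1))) S_d² R_g, i.e., strict inequality holds in the Hebey lower bound. -/

import Mathlib

open MeasureTheory

/-- The `L^p` norm (as a real number) of a real-valued function. -/
noncomputable def Lnorm {M : Type*} [MeasurableSpace M] (μ : Measure M) (p : ℝ)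
    (u : M → ℝ) : ℝ :=
  (eLpNorm u (ENNReal.ofReal p) μ).toReal

/-- For a closed constant-scalar-curvature manifold with Yamabe constant `Y < S_d^{-2}`
attained by a minimizer `u`, and the Sobolev inequality with sharp constant `S_d²` and
constant `B^{opt}`, one gets the strict Hebey lower bound
`B^{opt} > ((d-2)/(4(d-1))) S_d² R`. -/
theorem stmt18 {M : Type*} [MeasurableSpace M] (μ : Measure M) [IsFiniteMeasure μ]
    (d : ℕ) (hd : 4 ≤ d) (Sd R Y Bopt : ℝ) (hSd : 0 < Sd)
    (G : (M → ℝ) → ℝ) (u : M → ℝ)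
    (hYlt : Y < (Sd ^ 2)⁻¹)
    (hu2 : 0 < Lnorm μ 2 u)
    (hustar : 0 < Lnorm μ (2 * d / ((d : ℝ) - 2)) u)
    (hYam : (Lnorm μ (2 * d / ((d : ℝ) - 2)) u) ^ 2 * Y =
      (G u) ^ 2 + ((d : ℝ) - 2) * R / (4 * ((d : ℝ) - 1)) * (Lnorm μ 2 u) ^ 2)
    (hSob : (Lnorm μ (2 * d / ((d : ℝ) - 2)) u) ^ 2 ≤
      Sd ^ 2 * (G u) ^ 2 + Bopt * (Lnorm μ 2 u) ^ 2) :
    ((d : ℝ) - 2) / (4 * ((d : ℝ) - 1)) * Sd ^ 2 * R < Bopt := by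
  set N := Lnorm μ (2 * d / ((d : ℝ) - 2)) u with hN
  set L := Lnorm μ 2 u with hL
  have h1 : Sd ^ 2 * Y < 1 := by
    have := (mul_lt_mul_iff_right₀ (by positivity : (0:ℝ) < Sd ^ 2)).mpr hYlt
    rwa [mul_inv_cancel₀ (by positivity : (Sd:ℝ) ^ 2 ≠ 0)] at this
  have hd1 : (0:ℝ) < 4 * ((d : ℝ) - 1) := by
    have : (4:ℝ) ≤ d := by exact_mod_cast hd
    nlinarith
  rw [div_mul_eq_mul_div, div_mul_eq_mul_div, div_lt_iff₀ hd1]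
  have key : N ^ 2 * (1 - Sd ^ 2 * Y) ≤ (Bopt - ((d : ℝ) - 2) * R / (4 * ((d : ℝ) - 1)) * Sd ^ 2) * L ^ 2 := by
    nlinarith [hYam, hSob]
  have hpos : 0 < N ^ 2 * (1 - Sd ^ 2 * Y) := by
    exact mul_pos (pow_pos hustar 2) (by linarith)
  have : 0 < (Bopt - ((d : ℝ) - 2) * R / (4 * ((d : ℝ) - 1)) * Sd ^ 2) * L ^ 2 := lt_of_lt_of_le hpos key
  have hB : 0 < Bopt - ((d : ℝ) - 2) * R / (4 * ((d : ℝ) - 1)) * Sd ^ 2 := by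
    by_contra h
    push_neg at h
    nlinarith [sq_nonneg L, hu2]
  have hc : ((d : ℝ) - 2) * R / (4 * ((d : ℝ) - 1)) * Sd ^ 2 * (4 * ((d : ℝ) - 1)) = ((d : ℝ) - 2) * Sd ^ 2 * R := by
    rw [div_mul_eq_mul_div, div_mul_cancel₀ _ hd1.ne']; ring
  nlinarith [mul_pos hB hd1, hc]
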